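/- arXiv:2301.12177 — 3 statements merged into one kernel-verified Lean document; each statement's English description precedes it below -/
import Mathlib

section
/- Let H be the matrix H = (1/2) X^T (S^{-1} - R^T S^{-1} R) X where X = (I - R)^{-1} M, S is a symmetric positive definite n×n real matrix, R is an n×n real matrix with spectral radius ρ(R) = k < 1 satisfying R S = S R^T, and M is an n×n invertible real matrix. Then H is symmetric positive definite. -/
/-!
Since `RS = SRᵀ`, the matrix `R` is self-adjoint for the inner product given by `P = S⁻¹`.
Writing `P = B²` with `B = √P`, the matrix `C = B R B⁻¹` is therefore symmetric, has the same
spectrum as `R`, and `P - RᵀPR = B (1 - C²) B`. The real spectrum of `R` lies in the complex one,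
hence in `(-1, 1)`, so `1 - C²` is positive definite, and so are its congruences by the invertible
matrices `B` and `X = (1 - R)⁻¹ M`.
-/

open Matrix
open scoped MatrixOrder

namespace Matrix

variable {n : Type*} [Fintype n] [DecidableEq n]

theorem map_mem_spectrum_map {K L : Type*} [Field K] [Field L] (f : K →+* L) {A : Matrix n n K}
    {r : K} (hr : r ∈ spectrum K A) : f r ∈ spectrum L (A.map f) := by
  rw [mem_spectrum_iff_isRoot_charpoly] at hr ⊢
  rw [charpoly_map]
  exact hr.map

theorem IsHermitian.posDef_one_sub_mul_self {C : Matrix n n ℝ} (hC : C.IsHermitian)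
    (hspec : spectrum ℝ C ⊆ Set.Ioo (-1) 1) : (1 - C * C).PosDef := by
  have hCsa : IsSelfAdjoint C := hC
  have hcfc : cfc (fun x : ℝ => 1 - x * x) C = 1 - C * C := by
    rw [cfc_sub .., cfc_const_one .., cfc_mul .., cfc_id' ..]
  rw [← isStrictlyPositive_iff_posDef, ← hcfc, cfc_isStrictlyPositive_iff ..]
  intro x hx
  obtain ⟨hlow, hupp⟩ := hspec hx
  nlinarith

theorem PosDef.sub_transpose_mul_mul {P R : Matrix n n ℝ} (hP : P.PosDef)
    (hPR : Rᵀ * P = P * R) (hR : spectrum ℝ R ⊆ Set.Ioo (-1) 1) :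
    (P - Rᵀ * P * R).PosDef := by
  set B := CFC.sqrt P
  have hBB : B * B = P := CFC.sqrt_mul_sqrt_self P hP.posSemidef.nonneg
  have hBsymm : Bᵀ = B := (CFC.sqrt_nonneg P).posSemidef.1
  have hB : IsUnit B := (CFC.isUnit_sqrt_iff P hP.posSemidef.nonneg).mpr hP.isUnit
  have hBdet : IsUnit B.det := (isUnit_iff_isUnit_det B).mp hB
  set C := B * R * B⁻¹
  have hCB : C * B = B * R := by simp [C, mul_assoc, nonsing_inv_mul _ hBdet]
  have hCsymm : Cᵀ = C := by
    calc Cᵀ = B⁻¹ * Rᵀ * (B * B) * B⁻¹ := by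
          simp [C, transpose_nonsing_inv, hBsymm, mul_assoc, mul_nonsing_inv _ hBdet]
      _ = B * R * B⁻¹ := by
          rw [hBB, mul_assoc B⁻¹, hPR, ← hBB]
          simp [mul_assoc, nonsing_inv_mul_cancel_left _ _ hBdet]
  have hBC : B * C = Rᵀ * B := by
    rw [← hBsymm, ← hCsymm, ← transpose_mul, hCB, transpose_mul]
  have hC : C.IsHermitian := hCsymm
  have hspecC : spectrum ℝ C = spectrum ℝ R := by
    simpa [C, hB.unit_spec, coe_units_inv] using
      spectrum.units_conjugate (R := ℝ) (a := R) (u := hB.unit)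
  have hBinj : Function.Injective B.mulVec := mulVec_injective_iff_isUnit.mpr hB
  convert (hC.posDef_one_sub_mul_self (hspecC ▸ hR)).conjTranspose_mul_mul_same hBinj using 1
  rw [conjTranspose_eq_transpose_of_trivial, hBsymm, mul_sub, sub_mul, mul_one, hBB,
    ← mul_assoc, hBC, mul_assoc (Rᵀ * B), hCB, ← hBB]
  simp only [mul_assoc]

end Matrix

theorem stmt0 {n : ℕ} (S R M X H : Matrix (Fin n) (Fin n) ℝ) (k : ℝ)
    (hS : S.PosDef) (hM : IsUnit M.det)
    (hcomm : R * S = S * Rᵀ)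
    (hk : k < 1)
    (hspec : IsGreatest ((fun z : ℂ => ‖z‖) '' spectrum ℂ (R.map (algebraMap ℝ ℂ))) k)
    (hX : X = (1 - R)⁻¹ * M)
    (hH : H = (1 / 2 : ℝ) • (Xᵀ * (S⁻¹ - Rᵀ * S⁻¹ * R) * X)) :
    H.PosDef := by
  have hSdet : IsUnit S.det := hS.isUnit.map detMonoidHom
  have hRspec : spectrum ℝ R ⊆ Set.Ioo (-1) 1 := by
    intro r hr
    have hrC := hspec.2 ⟨_, map_mem_spectrum_map (algebraMap ℝ ℂ) hr, rfl⟩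
    exact abs_lt.mp ((by simpa using hrC : |r| ≤ k).trans_lt hk)
  have hRS : Rᵀ * S⁻¹ = S⁻¹ * R := by
    calc Rᵀ * S⁻¹ = S⁻¹ * (S * Rᵀ) * S⁻¹ := by simp [← mul_assoc, nonsing_inv_mul _ hSdet]
      _ = S⁻¹ * R := by rw [← hcomm]; simp [mul_assoc, mul_nonsing_inv _ hSdet]
  have hOneSubR : IsUnit (1 - R) := by
    simpa using spectrum.notMem_iff.mp fun h => (hRspec h).2.false
  have hXinj : Function.Injective X.mulVec := by
    rw [mulVec_injective_iff_isUnit, hX]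
    exact (isUnit_nonsing_inv_iff.mpr hOneSubR).mul ((isUnit_iff_isUnit_det M).mpr hM)
  rw [hH, ← conjTranspose_eq_transpose_of_trivial]
  exact ((hS.inv.sub_transpose_mul_mul hRS hRspec).conjTranspose_mul_mul_same hXinj).smul
    (by norm_num)
end

section
/- If S is symmetric positive definite and R satisfies RS = SR^T with spectral radius ρ(R) = k < 1, then for all y ∈ ℝ^n, y^T (S^{-1} − R^T S^{-1} R) y ≥ (1 − k²) y^T S^{-1} y; in particular S^{-1} − R^T S^{-1} R is symmetric positive definite. -/
/-!
Write `S⁻¹ = P * P` with `P = S^{-1/2}` self-adjoint and invertible. Since `S⁻¹ R = Rᵀ S⁻¹`, the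
conjugate `M = P R P⁻¹` is self-adjoint, and it has the spectrum of `R`, so `M² ≤ k²` by the
functional calculus. Conjugating back by `P` gives `Rᵀ S⁻¹ R = P M² P ≤ k² S⁻¹` in the Loewner
order, that is `S⁻¹ - Rᵀ S⁻¹ R ≥ (1 - k²) S⁻¹`, which is positive definite because `k < 1`.
-/

open Matrix
open scoped MatrixOrder

section StarOrderedAlgebra

variable {A : Type*} [PartialOrder A] [Ring A] [StarRing A] [TopologicalSpace A]
  [StarOrderedRing A] [Algebra ℝ A] [ContinuousFunctionalCalculus ℝ A IsSelfAdjoint]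

theorem IsSelfAdjoint.sq_le_algebraMap {a : A} (ha : IsSelfAdjoint a) {k : ℝ}
    (h : ∀ x ∈ spectrum ℝ a, |x| ≤ k) : a ^ 2 ≤ algebraMap ℝ A (k ^ 2) := by
  rw [← cfc_pow_id (R := ℝ) a 2, ← cfc_const (k ^ 2) a]
  refine cfc_mono fun x hx => ?_
  simpa only [sq_abs] using pow_le_pow_left₀ (abs_nonneg x) (h x hx) 2

variable [NonnegSpectrumClass ℝ A] [IsSemitopologicalRing A] [T2Space A]

theorem star_mul_mul_le_smul_of_mul_eq_star_mul {q r : A} (hq : IsStrictlyPositive q)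
    (hqr : q * r = star r * q) {k : ℝ} (h : ∀ x ∈ spectrum ℝ r, |x| ≤ k) :
    star r * q * r ≤ k ^ 2 • q := by
  obtain ⟨p, ⟨u, rfl⟩, hu, rfl⟩ :=
    CStarAlgebra.isStrictlyPositive_iff_exists_isUnit_and_isSelfAdjoint_and_eq_mul_self.mp hq
  set m : A := u * r * ↑u⁻¹
  have hmu : m * u = u * r := by simp [m, mul_assoc]
  have hu_inv : IsSelfAdjoint (↑u⁻¹ : A) := by
    have : star u = u := Units.ext (by rw [Units.coe_star, hu.star_eq])
    rw [IsSelfAdjoint, ← Units.coe_star_inv, this]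
  have hm : IsSelfAdjoint m := by
    rw [IsSelfAdjoint, star_mul, star_mul, hu.star_eq, hu_inv.star_eq, Units.eq_mul_inv_iff_mul_eq]
    simp only [mul_assoc]
    rw [Units.inv_mul_eq_iff_eq_mul, ← mul_assoc, mul_assoc _ _ (u : A), ← hqr, mul_assoc]
  have hspec : spectrum ℝ m = spectrum ℝ r := spectrum.units_conjugate
  calc star r * (↑u * ↑u) * r = star (↑u * r) * (↑u * r) := by
        rw [star_mul, hu.star_eq]; simp only [mul_assoc]
    _ = ↑u * m ^ 2 * ↑u := by
        rw [← hmu, star_mul, hu.star_eq, hm.star_eq]; simp only [sq, mul_assoc]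
    _ ≤ ↑u * algebraMap ℝ A (k ^ 2) * ↑u :=
        hu.conjugate_le_conjugate (hm.sq_le_algebraMap (hspec ▸ h))
    _ = k ^ 2 • ((u : A) * u) := by rw [Algebra.algebraMap_eq_smul_one]; simp

end StarOrderedAlgebra

theorem Matrix.map_mem_spectrum_map_s2 {n K L : Type*} [Fintype n] [DecidableEq n] [Field K]
    [Field L] {A : Matrix n n K} {μ : K} (h : μ ∈ spectrum K A) (f : K →+* L) :
    f μ ∈ spectrum L (A.map f) := by
  rw [mem_spectrum_iff_isRoot_charpoly] at h ⊢
  rw [charpoly_map]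
  exact h.map

theorem stmt2 {n : ℕ} (S R : Matrix (Fin n) (Fin n) ℝ) (k : ℝ)
    (hS : S.PosDef) (hcomm : R * S = S * Rᵀ)
    (hk : k < 1)
    (hspec : IsGreatest ((fun z : ℂ => ‖z‖) '' spectrum ℂ (R.map (algebraMap ℝ ℂ))) k) :
    (∀ y : Fin n → ℝ,
        (1 - k ^ 2) * (y ⬝ᵥ S⁻¹ *ᵥ y) ≤ y ⬝ᵥ (S⁻¹ - Rᵀ * S⁻¹ * R) *ᵥ y) ∧
      (S⁻¹ - Rᵀ * S⁻¹ * R).PosDef := by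
  have hk0 : 0 ≤ k := by
    obtain ⟨z, -, rfl⟩ := hspec.1
    exact norm_nonneg z
  have hR : ∀ μ ∈ spectrum ℝ R, |μ| ≤ k := fun μ hμ => by
    simpa using hspec.2 ⟨_, map_mem_spectrum_map_s2 hμ (algebraMap ℝ ℂ), rfl⟩
  have hRstar : star R = Rᵀ := by
    rw [star_eq_conjTranspose, conjTranspose_eq_transpose_of_trivial]
  have hSR : S⁻¹ * R = star R * S⁻¹ := by
    obtain ⟨u, rfl⟩ := hS.isUnit
    rw [hRstar, ← coe_units_inv]
    exact SemiconjBy.units_inv_symm_left hcomm.symm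
  have hle : Rᵀ * S⁻¹ * R ≤ k ^ 2 • S⁻¹ :=
    hRstar ▸ star_mul_mul_le_smul_of_mul_eq_star_mul hS.inv.isStrictlyPositive hSR hR
  have hgap : (1 - k ^ 2) • S⁻¹ ≤ S⁻¹ - Rᵀ * S⁻¹ * R := by
    rw [sub_smul, one_smul]
    exact sub_le_sub_left hle _
  refine ⟨fun y => ?_, ?_⟩
  · have := (le_iff.mp hgap).dotProduct_mulVec_nonneg y
    simp only [sub_mulVec, smul_mulVec, dotProduct_sub, dotProduct_smul, star_trivial,
      smul_eq_mul] at this ⊢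
    linarith
  · simpa using (hS.inv.smul (by nlinarith : 0 < 1 - k ^ 2)).add_posSemidef (le_iff.mp hgap)
end

section
/- Define S_0(a,b) = ∫_0^∞ x φ_a(x) φ_b(x) ω_0(x) dx. If a and b are both even, then S_0(a,b) = (2π)^{-1/2} · (a+b+1)/(1−(a−b)²) · z_a z_b, where z_n = φ_n(0), i.e., z_0 = 1 and z_{n+1} = −√n z_{n−1}/√(n+1). -/
/-!
Since `φₙ' = √n φₙ₋₁`, the three-term recurrence makes `φₙ` a solution of the Hermite equation
`f'' = x f' - n f`. Hence the Wronskian `W = φₘ' φₙ - φₘ φₙ'` satisfies `(W ω₀)' = (n - m) φₘ φₙ ω₀`,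
and since polynomials times `ω₀` are integrable and vanish at infinity,
`∫₀^∞ φₘ φₙ ω₀ = W(0) ω₀(0) / (m - n)` for `m ≠ n`. Writing `x φₐ = √(a+1) φₐ₊₁ + √a φₐ₋₁` reduces
`S₀(a, b)` to two such integrals with `m = a ± 1` odd, where `φₘ(0) = 0` and `φₘ'(0)` is read off
the recurrence at `x = 0`.
-/

open MeasureTheory

noncomputable def phi : ℕ → ℝ → ℝ
  | 0 => fun _ => 1
  | 1 => fun x => x
  | (n + 2) => fun x =>
      (x * phi (n + 1) x - Real.sqrt ((n : ℝ) + 1) * phi n x) / Real.sqrt ((n : ℝ) + 2)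

noncomputable def ω0 (x : ℝ) : ℝ := (Real.sqrt (2 * Real.pi))⁻¹ * Real.exp (-x ^ 2 / 2)

open Real Set Filter Topology Polynomial

noncomputable def phiDeriv : ℕ → ℝ → ℝ
  | 0 => fun _ => 0
  | (n + 1) => fun x => √((n : ℝ) + 1) * phi n x

lemma phi_add_two (n : ℕ) (x : ℝ) :
    phi (n + 2) x = (x * phi (n + 1) x - √((n : ℝ) + 1) * phi n x) / √((n : ℝ) + 2) :=
  rfl

lemma phiDeriv_succ (n : ℕ) (x : ℝ) : phiDeriv (n + 1) x = √((n : ℝ) + 1) * phi n x :=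
  rfl

lemma mul_phi (n : ℕ) (x : ℝ) :
    x * phi n x = √((n : ℝ) + 1) * phi (n + 1) x + phiDeriv n x := by
  cases n with
  | zero => simp [phi, phiDeriv]
  | succ n =>
    have hsqrt : √((n : ℝ) + 2) ≠ 0 := by positivity
    rw [phi_add_two, phiDeriv_succ, Nat.cast_succ, add_assoc, one_add_one_eq_two,
      mul_div_cancel₀ _ hsqrt]
    ring

lemma phiDeriv_apply_zero (n : ℕ) : phiDeriv n 0 = -(√((n : ℝ) + 1) * phi (n + 1) 0) := by
  linear_combination -mul_phi n 0

lemma phi_apply_zero_of_odd {n : ℕ} (hn : Odd n) : phi n 0 = 0 := by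
  obtain ⟨k, rfl⟩ := hn
  induction k with
  | zero => rfl
  | succ k ih => rw [show 2 * (k + 1) + 1 = 2 * k + 1 + 2 by ring, phi_add_two, ih]; simp

lemma hasDerivAt_phi (n : ℕ) (x : ℝ) : HasDerivAt (phi n) (phiDeriv n x) x := by
  induction n using phi.induct generalizing x with
  | case1 => exact hasDerivAt_const x 1
  | case2 => simpa [phi, phiDeriv] using hasDerivAt_id' x
  | case3 n ih₁ ih₀ =>
    have h := (((hasDerivAt_id x).mul (ih₁ x)).sub ((ih₀ x).const_mul √((n : ℝ) + 1))).div_const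
      √((n : ℝ) + 2)
    refine h.congr_deriv ?_
    have hs₁ : √((n : ℝ) + 1) ^ 2 = n + 1 := sq_sqrt (by positivity)
    have hs₂ : √((n : ℝ) + 2) ^ 2 = n + 2 := sq_sqrt (by positivity)
    have hsqrt : √((n : ℝ) + 2) ≠ 0 := by positivity
    rw [phiDeriv_succ, phiDeriv_succ, div_eq_iff hsqrt, id_eq,
      show ((n + 1 : ℕ) : ℝ) + 1 = n + 2 by push_cast; ring]
    linear_combination √((n : ℝ) + 1) * mul_phi n x + phi (n + 1) x * (hs₁ - hs₂)

lemma hasDerivAt_phiDeriv (n : ℕ) (x : ℝ) :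
    HasDerivAt (phiDeriv n) (x * phiDeriv n x - n * phi n x) x := by
  cases n with
  | zero => simpa [phiDeriv] using hasDerivAt_const x (0 : ℝ)
  | succ n =>
    refine ((hasDerivAt_phi n x).const_mul √((n : ℝ) + 1)).congr_deriv ?_
    have hs : √((n : ℝ) + 1) ^ 2 = n + 1 := sq_sqrt (by positivity)
    rw [phiDeriv_succ]
    push_cast
    linear_combination -√((n : ℝ) + 1) * mul_phi n x - phi (n + 1) x * hs

lemma ω0_zero : ω0 0 = (√(2 * π))⁻¹ := by
  simp [ω0]

lemma mul_ω0_eq (f : ℝ → ℝ) (x : ℝ) :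
    f x * ω0 x = (√(2 * π))⁻¹ * (f x * exp (-(1 / 2) * x ^ 2)) := by
  simp only [ω0]
  ring_nf

lemma hasDerivAt_ω0 (x : ℝ) : HasDerivAt ω0 (-x * ω0 x) x := by
  have h := (((hasDerivAt_pow 2 x).neg).div_const 2).exp.const_mul (√(2 * π))⁻¹
  refine h.congr_deriv ?_
  simp only [ω0, Pi.neg_apply]
  ring

lemma hasDerivAt_wronskian_mul_ω0 {f f' g g' : ℝ → ℝ} {m n x : ℝ}
    (hf : HasDerivAt f (f' x) x) (hf' : HasDerivAt f' (x * f' x - m * f x) x)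
    (hg : HasDerivAt g (g' x) x) (hg' : HasDerivAt g' (x * g' x - n * g x) x) :
    HasDerivAt (fun x => (f' x * g x - f x * g' x) * ω0 x)
      ((n - m) * (f x * g x) * ω0 x) x := by
  refine (((hf'.mul hg).sub (hf.mul hg')).mul (hasDerivAt_ω0 x)).congr_deriv ?_
  simp only [Pi.sub_apply, Pi.mul_apply]
  ring

noncomputable def polyFunctions : Subalgebra ℝ (ℝ → ℝ) := (aeval (id : ℝ → ℝ)).range

lemma mem_polyFunctions {f : ℝ → ℝ} : f ∈ polyFunctions ↔ ∃ p : ℝ[X], ∀ x, f x = p.eval x := by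
  simp [polyFunctions, funext_iff, eq_comm]

lemma id_mem_polyFunctions : (id : ℝ → ℝ) ∈ polyFunctions := ⟨X, aeval_X _⟩

lemma phi_mem_polyFunctions (n : ℕ) : phi n ∈ polyFunctions := by
  induction n using phi.induct with
  | case1 => exact one_mem _
  | case2 => exact id_mem_polyFunctions
  | case3 n ih₁ ih₀ =>
    have h : phi (n + 2) = (√((n : ℝ) + 2))⁻¹ • (id * phi (n + 1) - √((n : ℝ) + 1) • phi n) := by
      ext x
      simp [phi_add_two, div_eq_inv_mul]
    rw [h]
    exact Subalgebra.smul_mem _ (sub_mem (mul_mem id_mem_polyFunctions ih₁)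
      (Subalgebra.smul_mem _ ih₀ _)) _

lemma phiDeriv_mem_polyFunctions (n : ℕ) : phiDeriv n ∈ polyFunctions := by
  cases n with
  | zero => exact zero_mem _
  | succ n => exact Subalgebra.smul_mem _ (phi_mem_polyFunctions n) √((n : ℝ) + 1)

lemma integrableOn_Ioi_eval_mul_exp_neg_mul_sq {b : ℝ} (hb : 0 < b) (p : ℝ[X]) :
    IntegrableOn (fun x => p.eval x * exp (-b * x ^ 2)) (Ioi 0) := by
  have hmonomial (i : ℕ) : IntegrableOn (fun x : ℝ => x ^ i * exp (-b * x ^ 2)) (Ioi 0) := by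
    simpa [rpow_natCast] using
      integrableOn_rpow_mul_exp_neg_mul_sq hb (s := i) (by linarith [i.cast_nonneg (α := ℝ)])
  simp_rw [eval_eq_sum_range, Finset.sum_mul, mul_assoc]
  exact integrable_finsetSum _ fun i _ => (hmonomial i).const_mul _

lemma tendsto_eval_mul_exp_neg_mul_sq_atTop {b : ℝ} (hb : 0 < b) (p : ℝ[X]) :
    Tendsto (fun x => p.eval x * exp (-b * x ^ 2)) atTop (𝓝 0) := by
  refine squeeze_zero_norm' ?_ (by simpa using p.tendsto_div_exp_atTop.abs)
  filter_upwards [eventually_ge_atTop b⁻¹] with x hx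
  have hbx : 1 ≤ b * x := by rwa [← inv_mul_le_iff₀ hb, mul_one]
  rw [norm_mul, norm_of_nonneg (exp_pos _).le, abs_div, abs_of_pos (exp_pos x), div_eq_mul_inv,
    ← exp_neg, Real.norm_eq_abs]
  gcongr
  nlinarith

lemma integrableOn_Ioi_mul_ω0 {f : ℝ → ℝ} (hf : f ∈ polyFunctions) :
    IntegrableOn (fun x => f x * ω0 x) (Ioi 0) := by
  obtain ⟨p, hp⟩ := mem_polyFunctions.1 hf
  simp_rw [mul_ω0_eq, hp]
  exact (integrableOn_Ioi_eval_mul_exp_neg_mul_sq one_half_pos p).const_mul _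

lemma integrableOn_Ioi_mul_mul_ω0 {f g : ℝ → ℝ} (hf : f ∈ polyFunctions)
    (hg : g ∈ polyFunctions) : IntegrableOn (fun x => f x * g x * ω0 x) (Ioi 0) :=
  integrableOn_Ioi_mul_ω0 (mul_mem hf hg)

lemma tendsto_mul_ω0_atTop {f : ℝ → ℝ} (hf : f ∈ polyFunctions) :
    Tendsto (fun x => f x * ω0 x) atTop (𝓝 0) := by
  obtain ⟨p, hp⟩ := mem_polyFunctions.1 hf
  simp_rw [mul_ω0_eq, hp]
  simpa using (tendsto_eval_mul_exp_neg_mul_sq_atTop one_half_pos p).const_mul (√(2 * π))⁻¹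

lemma integral_Ioi_eq_neg_of_hasDerivAt_mul_ω0 {f g : ℝ → ℝ} (hf : f ∈ polyFunctions)
    (hg : g ∈ polyFunctions) (hderiv : ∀ x, HasDerivAt (fun x => f x * ω0 x) (g x * ω0 x) x) :
    ∫ x in Ioi 0, g x * ω0 x = -(f 0 * ω0 0) := by
  rw [integral_Ioi_of_hasDerivAt_of_tendsto' (fun x _ => hderiv x) (integrableOn_Ioi_mul_ω0 hg)
    (tendsto_mul_ω0_atTop hf), zero_sub]

lemma integral_Ioi_phi_mul_phi_mul_ω0 {m n : ℕ} (hmn : m ≠ n) :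
    ∫ x in Ioi 0, phi m x * phi n x * ω0 x
      = (phiDeriv m 0 * phi n 0 - phi m 0 * phiDeriv n 0) * ω0 0 / (m - n) := by
  have h := integral_Ioi_eq_neg_of_hasDerivAt_mul_ω0
    (f := fun x => phiDeriv m x * phi n x - phi m x * phiDeriv n x)
    (g := fun x => (n - m : ℝ) * (phi m x * phi n x))
    (sub_mem (mul_mem (phiDeriv_mem_polyFunctions m) (phi_mem_polyFunctions n))
      (mul_mem (phi_mem_polyFunctions m) (phiDeriv_mem_polyFunctions n)))
    (Subalgebra.smul_mem _ (mul_mem (phi_mem_polyFunctions m) (phi_mem_polyFunctions n)) _)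
    (fun x => hasDerivAt_wronskian_mul_ω0 (hasDerivAt_phi m x) (hasDerivAt_phiDeriv m x)
      (hasDerivAt_phi n x) (hasDerivAt_phiDeriv n x))
  simp_rw [mul_assoc, integral_const_mul] at h
  rw [eq_div_iff (sub_ne_zero.2 (Nat.cast_injective.ne hmn))]
  simp_rw [mul_assoc]
  linear_combination -h

lemma natCast_sub_add_one_ne_zero_of_even {a b : ℕ} (ha : Even a) (hb : Even b) :
    (a : ℝ) - b + 1 ≠ 0 := by
  intro h
  have hb' : b = a + 1 := by exact_mod_cast (by linarith : (b : ℝ) = a + 1)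
  rw [hb', Nat.even_add_one] at hb
  exact hb ha

lemma integral_Ioi_phiDeriv_mul_phi_mul_ω0 {a b : ℕ} (ha : Even a) (hb : Even b) :
    ∫ x in Ioi 0, phiDeriv a x * phi b x * ω0 x
      = a * (phi a 0 * phi b 0) * ω0 0 / (b - a + 1) := by
  cases a with
  | zero => simp [phiDeriv]
  | succ k =>
    have hk : Odd k := Nat.not_even_iff_odd.1 (Nat.even_add_one.1 ha)
    have hkb : k ≠ b := fun h => Nat.not_even_iff_odd.2 hk (h ▸ hb)
    have hs : √((k : ℝ) + 1) ^ 2 = k + 1 := sq_sqrt (by positivity)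
    simp_rw [phiDeriv_succ, mul_assoc, integral_const_mul, ← mul_assoc,
      integral_Ioi_phi_mul_phi_mul_ω0 hkb, phi_apply_zero_of_odd hk, phiDeriv_apply_zero]
    have hden : (k : ℝ) - b ≠ 0 := sub_ne_zero.2 (Nat.cast_injective.ne hkb)
    push_cast
    rw [show (b : ℝ) - (k + 1) + 1 = -(k - b) by ring]
    field_simp
    linear_combination -(phi (k + 1) 0 * phi b 0 * ω0 0) * hs

theorem stmt9 (a b : ℕ) (ha : Even a) (hb : Even b) :
    ∫ x in Set.Ioi (0 : ℝ), x * phi a x * phi b x * ω0 x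
      = (Real.sqrt (2 * Real.pi))⁻¹ * (((a : ℝ) + (b : ℝ) + 1) / (1 - ((a : ℝ) - (b : ℝ)) ^ 2))
          * (phi a 0 * phi b 0) := by
  have hab := natCast_sub_add_one_ne_zero_of_even ha hb
  have hba := natCast_sub_add_one_ne_zero_of_even hb ha
  have hne : a + 1 ≠ b := by rintro rfl; push_cast at hab; exact hab (by ring)
  have hrec (x : ℝ) : x * phi a x * phi b x * ω0 x
      = √((a : ℝ) + 1) * (phi (a + 1) x * phi b x * ω0 x) + phiDeriv a x * phi b x * ω0 x := by
    rw [mul_phi]; ring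
  have hs : √((a : ℝ) + 1) ^ 2 = a + 1 := sq_sqrt (by positivity)
  simp_rw [hrec]
  rw [integral_add ((integrableOn_Ioi_mul_mul_ω0 (phi_mem_polyFunctions _)
      (phi_mem_polyFunctions _)).const_mul _) (integrableOn_Ioi_mul_mul_ω0
      (phiDeriv_mem_polyFunctions _) (phi_mem_polyFunctions _)),
    integral_const_mul, integral_Ioi_phi_mul_phi_mul_ω0 hne,
    integral_Ioi_phiDeriv_mul_phi_mul_ω0 ha hb, phiDeriv_succ, phi_apply_zero_of_odd ha.add_one,
    ω0_zero]
  rw [show (1 : ℝ) - (a - b) ^ 2 = (a - b + 1) * (b - a + 1) by ring]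
  push_cast
  rw [show (a : ℝ) + 1 - b = a - b + 1 by ring]
  field_simp
  linear_combination phi a 0 * phi b 0 * (b - a + 1) * hs
end
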